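/- arXiv:2409.15059 — 2 statements merged into one kernel-verified Lean document; each statement's English description precedes it below -/
import Mathlib

section
/- Let d ≥ 2, n ≥ 1, δ = 1/n, let τ : [0,1]^{d−1} → [0,1] be continuous, and let Λ₊ = {(x,y) ∈ [0,1]^{d−1} × [0,1] : y > τ(x)}. For γ ∈ [n]^{d−1} set ζ↓_γ = δ·⌊δ^{−1} · min_{x ∈ Sq_{d−1}(γ)} τ(x)⌋. Then the minimal tiling of Λ₊ satisfies (Λ₊)⁺ = ⋃_{γ ∈ [n]^{d−1} : ζ↓_γ < 1} Sq_{d−1}(γ) × [ζ↓_γ, 1]. -/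
open MeasureTheory

noncomputable section

/-- The unit cube `[0,1]^k` as a subset of `Fin k → ℝ`. -/
def unitCube (k : ℕ) : Set (Fin k → ℝ) := Set.univ.pi fun _ => Set.Icc (0 : ℝ) 1

/-- The closed grid hypercube of edge length `δ = 1/n` indexed by `γ ∈ [n]^k`. -/
def Sq (n : ℕ) {k : ℕ} (γ : Fin k → Fin n) : Set (Fin k → ℝ) :=
  Set.univ.pi fun i => Set.Icc ((γ i : ℝ) / n) (((γ i : ℝ) + 1) / n)

/-- `[0,1]^{k} × [0,1]`, the unit cube viewed as a product. -/
def cubeP (k : ℕ) : Set ((Fin k → ℝ) × ℝ) := (unitCube k) ×ˢ Set.Icc (0 : ℝ) 1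

/-- The grid hypercube `Sq_{d-1}(γ) × [jδ,(j+1)δ]` in the product representation. -/
def SqP (n k : ℕ) (γ : Fin k → Fin n) (j : Fin n) : Set ((Fin k → ℝ) × ℝ) :=
  (Sq n γ) ×ˢ Set.Icc ((j : ℝ) / n) (((j : ℝ) + 1) / n)

/-- `C⁺` in the product representation: the union of all grid hypercubes
`Sq_{d-1}(γ) × [jδ,(j+1)δ]` whose interior meets `C`. -/
def tilePlusP (k n : ℕ) (C : Set ((Fin k → ℝ) × ℝ)) : Set ((Fin k → ℝ) × ℝ) :=
  ⋃ (γ : Fin k → Fin n) (j : Fin n) (_ : (interior (SqP n k γ j) ∩ C).Nonempty),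
    SqP n k γ j

/-- `ζ↓_γ = δ·⌊δ⁻¹ min_{x ∈ Sq_{d−1}(γ)} τ(x)⌋`, the grid projection of the minimum
of `τ` over the cube `Sq_{d−1}(γ)`. -/
def zetaDown (n : ℕ) {k : ℕ} (τ : (Fin k → ℝ) → ℝ) (γ : Fin k → Fin n) : ℝ :=
  (⌊(n : ℝ) * sInf (τ '' Sq n γ)⌋ : ℝ) / n

section aux
variable {n k : ℕ}

lemma npos (hn : 1 ≤ n) : (0:ℝ) < n := by exact_mod_cast hn

lemma Sq_subset_unitCube (hn : 1 ≤ n) (γ : Fin k → Fin n) : Sq n γ ⊆ unitCube k := by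
  intro x hx i _
  have h := hx i (Set.mem_univ i)
  have hn0 : (0:ℝ) < n := npos hn
  have h1 : (0:ℝ) ≤ (γ i : ℝ)/n := div_nonneg (by positivity) hn0.le
  have hγ : ((γ i : ℝ) + 1) ≤ n := by exact_mod_cast (γ i).isLt
  have h2 : ((γ i : ℝ)+1)/n ≤ 1 := by rw [div_le_one hn0]; exact hγ
  exact ⟨le_trans h1 h.1, le_trans h.2 h2⟩

lemma Sq_nonempty (hn : 1 ≤ n) (γ : Fin k → Fin n) : (Sq n γ).Nonempty := by
  refine ⟨fun i => (γ i : ℝ)/n, fun i _ => ⟨le_refl _, ?_⟩⟩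
  have hn0 : (0:ℝ) < n := npos hn
  apply div_le_div_of_nonneg_right (by linarith) hn0.le

lemma Sq_compact (γ : Fin k → Fin n) : IsCompact (Sq n γ) := isCompact_univ_pi fun i => isCompact_Icc

lemma interior_Sq (γ : Fin k → Fin n) : interior (Sq n γ)
    = Set.univ.pi fun i => Set.Ioo ((γ i : ℝ)/n) (((γ i : ℝ)+1)/n) := by
  rw [Sq, interior_pi_set Set.finite_univ]
  simp [interior_Icc]

lemma closure_interior_Sq (hn : 1 ≤ n) (γ : Fin k → Fin n) : closure (interior (Sq n γ)) = Sq n γ := by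
  have hn0 : (0:ℝ) < n := npos hn
  rw [interior_Sq, closure_pi_set, Sq]
  refine Set.pi_congr rfl fun i _ => ?_
  have : (γ i : ℝ)/n < ((γ i : ℝ)+1)/n :=
    by apply div_lt_div_of_pos_right (by linarith) hn0
  exact closure_Ioo this.ne

lemma exists_min (hn : 1 ≤ n) (γ : Fin k → Fin n) (τ : (Fin k → ℝ) → ℝ)
    (hτc : ContinuousOn τ (unitCube k)) : ∃ x₀ ∈ Sq n γ, τ x₀ = sInf (τ '' Sq n γ) ∧ ∀ x ∈ Sq n γ, τ x₀ ≤ τ x := by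
  obtain ⟨x₀, hx₀, hm⟩ := (Sq_compact γ).exists_isMinOn (Sq_nonempty hn γ)
    (hτc.mono (Sq_subset_unitCube hn γ))
  have hle : IsLeast (τ '' Sq n γ) (τ x₀) :=
    ⟨Set.mem_image_of_mem τ hx₀, by rintro y ⟨x, hx, rfl⟩; exact isMinOn_iff.mp hm x hx⟩
  exact ⟨x₀, hx₀, hle.csInf_eq.symm, fun x hx => isMinOn_iff.mp hm x hx⟩

end aux

/-- the minimal tiling of the open epigraph of a continuous interface
`τ : [0,1]^{d−1} → [0,1]` is the tiled epigraph of the maximal dominated grid function: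
`(Λ₊)⁺ = ⋃_{γ : ζ↓_γ < 1} Sq_{d−1}(γ) × [ζ↓_γ, 1]`. -/
theorem stmt12 (d n : ℕ) (hd : 2 ≤ d) (hn : 1 ≤ n)
    (τ : (Fin (d - 1) → ℝ) → ℝ)
    (hτc : ContinuousOn τ (unitCube (d - 1)))
    (hτr : ∀ x ∈ unitCube (d - 1), τ x ∈ Set.Icc (0 : ℝ) 1) :
    tilePlusP (d - 1) n {p : (Fin (d - 1) → ℝ) × ℝ | p ∈ cubeP (d - 1) ∧ τ p.1 < p.2}
      = ⋃ γ ∈ {γ : Fin (d - 1) → Fin n | zetaDown n τ γ < 1},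
          (Sq n γ) ×ˢ Set.Icc (zetaDown n τ γ) 1 := by
  have hn0 : (0:ℝ) < n := by exact_mod_cast hn
  ext p
  simp only [tilePlusP, Set.mem_iUnion, Set.mem_setOf_eq, exists_prop]
  constructor
  · rintro ⟨γ, j, ⟨q, hq, hqcube, hqτ⟩, hp⟩
    -- hq : q ∈ interior (SqP n (d-1) γ j)
    rw [SqP, interior_prod_eq, Set.mem_prod, interior_Icc] at hq
    obtain ⟨x₀, hx₀, hx₀eq, hx₀min⟩ := exists_min hn γ τ hτc
    set m := sInf (τ '' Sq n γ) with hm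
    have hq1Sq : q.1 ∈ Sq n γ := interior_subset hq.1
    have hmq : m ≤ τ q.1 := hx₀eq ▸ hx₀min q.1 hq1Sq
    have hj1 : ((j : ℝ) + 1) ≤ n := by exact_mod_cast j.isLt
    have hq2 : q.2 < ((j:ℝ)+1)/n := hq.2.2
    have hm1 : m < 1 := by
      have : m < ((j:ℝ)+1)/n := lt_of_le_of_lt (hmq.trans hqτ.le) hq2
      have h2 : ((j:ℝ)+1)/n ≤ 1 := by rw [div_le_one hn0]; exact hj1
      linarith
    have hfl : (⌊(n:ℝ) * m⌋ : ℝ) < n := by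
      exact_mod_cast Int.floor_lt.mpr (by push_cast; nlinarith)
    have hζ : zetaDown n τ γ < 1 := by
      rw [zetaDown, div_lt_one hn0]; exact hfl
    refine ⟨γ, hζ, ?_⟩
    rw [SqP, Set.mem_prod] at hp
    refine Set.mem_prod.mpr ⟨hp.1, ?_, ?_⟩
    · -- zetaDown ≤ j/n
      have hmlt : (n:ℝ) * m < (j:ℝ) + 1 := by
        have : m < ((j:ℝ)+1)/n := lt_of_le_of_lt (hmq.trans hqτ.le) hq2
        calc (n:ℝ) * m < (n:ℝ) * (((j:ℝ)+1)/n) := by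
              exact mul_lt_mul_of_pos_left this hn0
          _ = (j:ℝ)+1 := by field_simp
      have : ⌊(n:ℝ) * m⌋ ≤ (j : ℤ) := by
        have := Int.floor_lt.mpr (show (n:ℝ)*m < ((j:ℤ)+1 : ℤ) by push_cast; linarith)
        omega
      have hfr : (⌊(n:ℝ) * m⌋ : ℝ) ≤ (j:ℝ) := by exact_mod_cast this
      calc zetaDown n τ γ = (⌊(n:ℝ) * m⌋ : ℝ)/n := rfl
        _ ≤ (j:ℝ)/n := by gcongr
        _ ≤ p.2 := hp.2.1
    · calc p.2 ≤ ((j:ℝ)+1)/n := hp.2.2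
        _ ≤ 1 := by rw [div_le_one hn0]; exact hj1
  · rintro ⟨γ, hζ, hp⟩
    rw [Set.mem_prod] at hp
    obtain ⟨x₀, hx₀, hx₀eq, hx₀min⟩ := exists_min hn γ τ hτc
    set m := sInf (τ '' Sq n γ) with hm
    have hx₀cube : x₀ ∈ unitCube (d-1) := Sq_subset_unitCube hn γ hx₀
    have hm0 : 0 ≤ m := hx₀eq ▸ (hτr x₀ hx₀cube).1
    have hm1' : m ≤ 1 := hx₀eq ▸ (hτr x₀ hx₀cube).2
    set ℓ : ℤ := ⌊(n:ℝ) * m⌋ with hℓ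
    have hℓ0 : 0 ≤ ℓ := Int.floor_nonneg.mpr (by positivity)
    have hℓn : ℓ < n := by
      rw [zetaDown, div_lt_one hn0] at hζ
      exact_mod_cast hζ
    -- choose j
    set f : ℤ := ⌊(n:ℝ) * p.2⌋ with hf
    have hpl : (ℓ : ℝ)/n ≤ p.2 := hp.2.1
    have hfℓ : ℓ ≤ f := by
      apply Int.le_floor.mpr
      calc (ℓ : ℝ) = n * ((ℓ:ℝ)/n) := by field_simp
        _ ≤ n * p.2 := by gcongr
    have hf0 : 0 ≤ f := le_trans hℓ0 hfℓ
    set jv : ℕ := min f.toNat (n - 1) with hjv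
    have hjvn : jv < n := by omega
    set j : Fin n := ⟨jv, hjvn⟩ with hj
    have hjℓ : ℓ ≤ (jv : ℤ) := by omega
    have hjcast : (j : ℝ) = (jv : ℝ) := rfl
    -- p ∈ SqP n (d-1) γ j
    have hpmem : p ∈ SqP n (d-1) γ j := by
      refine Set.mem_prod.mpr ⟨hp.1, ?_, ?_⟩
      · have h1 : ((jv:ℤ) : ℝ) ≤ (n:ℝ) * p.2 := by
          calc ((jv:ℤ) : ℝ) ≤ (f : ℝ) := by exact_mod_cast (by omega : (jv:ℤ) ≤ f)
            _ ≤ (n:ℝ) * p.2 := Int.floor_le _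
        rw [hjcast, div_le_iff₀ hn0]
        push_cast at h1 ⊢
        linarith
      · rw [hjcast, le_div_iff₀ hn0]
        rcases le_or_gt f.toNat (n-1) with hc | hc
        · have hjf : (jv : ℤ) = f := by omega
          have h2 : (n:ℝ) * p.2 < (f : ℝ) + 1 := Int.lt_floor_add_one _
          have : ((jv:ℤ):ℝ) = (f:ℝ) := by exact_mod_cast hjf
          push_cast at this ⊢
          linarith
        · have hjn : jv = n - 1 := by omega
          have : p.2 ≤ 1 := hp.2.2
          have hcast : (jv : ℝ) + 1 = (n : ℝ) := by
            rw [hjn]; push_cast [Nat.cast_sub hn]; ring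
          rw [mul_comm]
          calc (n:ℝ) * p.2 ≤ (n:ℝ) * 1 := by gcongr
            _ = (jv:ℝ) + 1 := by rw [hcast, mul_one]
    refine ⟨γ, j, ?_, hpmem⟩
    -- construct a point in the interior of the tile meeting the epigraph
    have hjℓr : (ℓ : ℝ) ≤ ((jv:ℤ) : ℝ) := by exact_mod_cast hjℓ
    have hmlt : m < ((jv:ℝ)+1)/n := by
      have h1 : (n:ℝ) * m < (ℓ:ℝ) + 1 := by
        have h2 := Int.lt_floor_add_one ((n:ℝ)*m)
        push_cast at h2 ⊢
        exact h2
      rw [lt_div_iff₀ hn0]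
      push_cast at hjℓr
      nlinarith
    have hcw : ContinuousWithinAt τ (Sq n γ) x₀ :=
      (hτc.mono (Sq_subset_unitCube hn γ)) x₀ hx₀
    have hmem : τ ⁻¹' (Set.Iio (((jv:ℝ)+1)/n)) ∈ nhdsWithin x₀ (Sq n γ) :=
      hcw (Iio_mem_nhds (by rw [hx₀eq]; exact hmlt))
    obtain ⟨U, hUopen, hx₀U, hU⟩ := mem_nhdsWithin.mp hmem
    have hx₀cl : x₀ ∈ closure (interior (Sq n γ)) := by
      rw [closure_interior_Sq hn γ]; exact hx₀
    obtain ⟨x, hxU, hxint⟩ := (mem_closure_iff.mp hx₀cl) U hUopen hx₀U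
    have hτx : τ x < ((jv:ℝ)+1)/n := hU ⟨hxU, interior_subset hxint⟩
    have hjvlt : (jv:ℝ)/n < ((jv:ℝ)+1)/n := by
      apply div_lt_div_of_pos_right (by linarith) hn0
    have hmaxlt : max ((jv:ℝ)/n) (τ x) < ((jv:ℝ)+1)/n := max_lt hjvlt hτx
    set y : ℝ := (max ((jv:ℝ)/n) (τ x) + ((jv:ℝ)+1)/n)/2 with hy
    have hy1 : max ((jv:ℝ)/n) (τ x) < y := by rw [hy]; linarith
    have hy2 : y < ((jv:ℝ)+1)/n := by rw [hy]; linarith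
    have hygt : (jv:ℝ)/n < y := lt_of_le_of_lt (le_max_left _ _) hy1
    have hyτ : τ x < y := lt_of_le_of_lt (le_max_right _ _) hy1
    have hxSq : x ∈ Sq n γ := interior_subset hxint
    have hxcube : x ∈ unitCube (d-1) := Sq_subset_unitCube hn γ hxSq
    have hc1 : ((jv:ℝ)+1)/n ≤ 1 := by
      rw [div_le_one hn0]
      have : jv + 1 ≤ n := hjvn
      exact_mod_cast this
    have hy0 : 0 ≤ y := by
      have : (0:ℝ) ≤ (jv:ℝ)/n := div_nonneg (by positivity) hn0.le
      linarith
    refine ⟨(x, y), ?_, ⟨⟨hxcube, hy0, by linarith⟩, hyτ⟩⟩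
    rw [SqP, interior_prod_eq, Set.mem_prod, interior_Icc]
    exact ⟨hxint, hjcast ▸ ⟨hygt, hy2⟩⟩
end
end

section
/- Let d ≥ 2, n ≥ 1, δ = 1/n, β ∈ (0,1], L > 0, and let τ : [0,1]^{d−1} → [0,1] satisfy |τ(x) − τ(y)| ≤ L·‖x−y‖_∞^β for all x, y ∈ [0,1]^{d−1}. Let Λ₊ = {(x,y) ∈ [0,1]^{d−1} × [0,1] : y > τ(x)} and let B = {α ∈ [n]^d : Sq(α)° ∩ ∂Λ₊ ≠ ∅}, where ∂Λ₊ is the boundary of Λ₊ in the subspace topology of [0,1]^d. Then |B| ≤ (L + 2)·δ^{β−d}. -/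
open MeasureTheory

noncomputable section

/-- The boundary of `A` in the subspace topology of `s`, as a subset of `X`. -/
def bdryIn {X : Type*} [TopologicalSpace X] (s A : Set X) : Set X :=
  Subtype.val '' frontier {x : s | (x : X) ∈ A}

/-! Since `τ` is continuous, the boundary of the epigraph relative to the cube lies on the graph
of `τ`, so the cube `Sq(γ) × [jδ, (j+1)δ]` can only be counted if `τ` takes a value in
`(jδ, (j+1)δ)` on `Sq(γ)`. On one base cube `Sq(γ)` the oscillation of `τ` is at most `Lδ^β`,
so at most `Lδ^(β-1) + 2` layers `j` qualify; summing over the `δ^(1-d)` base cubes gives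
`δ^(1-d) (Lδ^(β-1) + 2) ≤ (L + 2) δ^(β-d)`. -/

open Finset

theorem Set.ncard_eq_sum_ncard_fiber {α β : Type*} [Fintype α] [Finite β] (S : Set (α × β)) :
    S.ncard = ∑ a, {b | (a, b) ∈ S}.ncard := by
  simp only [← Nat.card_coe_set_eq]
  rw [Nat.card_congr (Equiv.setProdEquivSigma S), Nat.card_sigma]

theorem continuousOn_of_abs_sub_le_mul_rpow {E : Type*} [SeminormedAddCommGroup E]
    {s : Set E} {f : E → ℝ} {β L : ℝ} (hβ : 0 < β)
    (hf : ∀ x ∈ s, ∀ y ∈ s, |f x - f y| ≤ L * ‖x - y‖ ^ β) : ContinuousOn f s := by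
  intro x hx
  rw [ContinuousWithinAt, tendsto_iff_norm_sub_tendsto_zero]
  have hlim : Filter.Tendsto (fun y => L * ‖y - x‖ ^ β) (nhdsWithin x s) (nhds 0) := by
    have h : Filter.Tendsto (fun y => ‖y - x‖) (nhds x) (nhds ‖x - x‖) :=
      ((continuous_id.sub continuous_const).norm.tendsto x)
    simpa [Real.zero_rpow hβ.ne'] using
      ((h.rpow_const (Or.inr hβ.le)).const_mul L).mono_left nhdsWithin_le_nhds
  refine squeeze_zero' (Filter.Eventually.of_forall fun _ => norm_nonneg _) ?_ hlim
  filter_upwards [self_mem_nhdsWithin] with y hy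
  exact hf y hy x hx

theorem bdryIn_setOf_lt_subset {X : Type*} [TopologicalSpace X] {s : Set X} {f g : X → ℝ}
    (hf : ContinuousOn f s) (hg : ContinuousOn g s) :
    bdryIn s {p | p ∈ s ∧ f p < g p} ⊆ {p | p ∈ s ∧ f p = g p} := by
  rintro _ ⟨x, hx, rfl⟩
  have hset : {x : s | (x : X) ∈ {p | p ∈ s ∧ f p < g p}} = {x : s | f x < g x} := by
    ext x; exact and_iff_right x.2
  rw [hset] at hx
  exact ⟨x.2, frontier_lt_subset_eq hf.domRestrict hg.domRestrict hx⟩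

theorem Finset.card_le_of_forall_lt_add {J : Finset ℕ} {C : ℝ} (hC : 0 ≤ C)
    (h : ∀ i ∈ J, ∀ j ∈ J, (j : ℝ) < i + 1 + C) : (#J : ℝ) ≤ C + 2 := by
  rcases J.eq_empty_or_nonempty with rfl | hJ
  · rw [card_empty, Nat.cast_zero]; linarith
  have hsub : J ⊆ Icc (J.min' hJ) (J.max' hJ) := fun j hj =>
    mem_Icc.mpr ⟨J.min'_le j hj, J.le_max' j hj⟩
  have hcard : #J ≤ J.max' hJ + 1 - J.min' hJ := Nat.card_Icc _ _ ▸ card_le_card hsub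
  have hspread := h _ (J.min'_mem hJ) _ (J.max'_mem hJ)
  have hle : J.min' hJ ≤ J.max' hJ + 1 := (J.min'_le_max' hJ).trans (Nat.le_succ _)
  calc (#J : ℝ) ≤ ((J.max' hJ + 1 - J.min' hJ : ℕ) : ℝ) := by exact_mod_cast hcard
    _ ≤ C + 2 := by push_cast [Nat.cast_sub hle]; linarith

theorem norm_sub_le_of_mem_Sq {n k : ℕ} {γ : Fin k → Fin n} {x y : Fin k → ℝ}
    (hx : x ∈ Sq n γ) (hy : y ∈ Sq n γ) : ‖x - y‖ ≤ 1 / n := by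
  refine (pi_norm_le_iff_of_nonneg (by positivity)).mpr fun i => ?_
  obtain ⟨hx₁, hx₂⟩ := hx i (Set.mem_univ i)
  obtain ⟨hy₁, hy₂⟩ := hy i (Set.mem_univ i)
  rw [Pi.sub_apply, Real.norm_eq_abs, abs_sub_le_iff]
  constructor <;> linarith [add_div (γ i : ℝ) 1 n]

theorem card_le_of_holder_meets_layers {k n : ℕ} (hn : 0 < n) {β L : ℝ} (hβ : 0 < β)
    (hL : 0 ≤ L) {τ : (Fin k → ℝ) → ℝ}
    (hτ : ∀ x ∈ unitCube k, ∀ y ∈ unitCube k, |τ x - τ y| ≤ L * ‖x - y‖ ^ β)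
    (γ : Fin k → Fin n) (J : Finset (Fin n))
    (hJ : ∀ j ∈ J, ∃ x ∈ Sq n γ ∩ unitCube k, (j : ℝ) / n < τ x ∧ τ x < ((j : ℝ) + 1) / n) :
    (#J : ℝ) ≤ L * n * (1 / n) ^ β + 2 := by
  have hn' : (0 : ℝ) < n := by exact_mod_cast hn
  rw [← card_image_of_injective J Fin.val_injective]
  refine card_le_of_forall_lt_add (by positivity) ?_
  simp only [mem_image]
  rintro _ ⟨i, hi, rfl⟩ _ ⟨j, hj, rfl⟩
  obtain ⟨x, ⟨hxSq, hx⟩, -, hτx⟩ := hJ i hi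
  obtain ⟨y, ⟨hySq, hy⟩, hτy, -⟩ := hJ j hj
  have hτyx : τ y - τ x ≤ L * (1 / n) ^ β :=
    calc τ y - τ x ≤ L * ‖y - x‖ ^ β := (le_abs_self _).trans (hτ y hy x hx)
      _ ≤ L * (1 / n) ^ β := by
        gcongr
        exact norm_sub_le_of_mem_Sq hySq hxSq
  rw [div_lt_iff₀ hn'] at hτy
  rw [lt_div_iff₀ hn'] at hτx
  nlinarith

theorem pow_mul_add_le_rpow {n d : ℕ} (hn : 1 ≤ n) (hd : 1 ≤ d) {β : ℝ} (hβ : β ≤ 1) (L : ℝ) :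
    (n : ℝ) ^ (d - 1) * (L * n * (1 / n) ^ β + 2) ≤ (L + 2) * (1 / (n : ℝ)) ^ (β - d) := by
  have hx1 : (1 : ℝ) ≤ n := by exact_mod_cast hn
  have hx0 : (0 : ℝ) ≤ n := by linarith
  have hd' : ((d - 1 : ℕ) : ℝ) = d - 1 := by push_cast [Nat.cast_sub hd]; ring
  have hinv : ∀ e : ℝ, (1 / (n : ℝ)) ^ e = (n : ℝ) ^ (-e) := fun e => by
    rw [one_div, Real.inv_rpow hx0, Real.rpow_neg hx0]
  have hmain : (n : ℝ) ^ (d - 1) * (n * (1 / n) ^ β) = (n : ℝ) ^ ((d : ℝ) - β) := by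
    have hpos : (0 : ℝ) < n := by linarith
    rw [hinv, mul_comm (n : ℝ), ← Real.rpow_add_one hpos.ne', ← Real.rpow_natCast, hd',
      ← Real.rpow_add hpos]
    ring_nf
  have hlow : (n : ℝ) ^ (d - 1) ≤ (n : ℝ) ^ ((d : ℝ) - β) := by
    rw [← Real.rpow_natCast, hd']
    exact Real.rpow_le_rpow_of_exponent_le hx1 (by linarith)
  calc (n : ℝ) ^ (d - 1) * (L * n * (1 / n) ^ β + 2)
      = L * ((n : ℝ) ^ (d - 1) * (n * (1 / n) ^ β)) + 2 * (n : ℝ) ^ (d - 1) := by ring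
    _ ≤ (L + 2) * (1 / (n : ℝ)) ^ (β - d) := by rw [hmain, hinv, neg_sub]; linarith

theorem exists_mem_Sq_of_mem_interior_SqP {k n : ℕ} {γ : Fin k → Fin n} {j : Fin n}
    {τ : (Fin k → ℝ) → ℝ} {p : (Fin k → ℝ) × ℝ} (hp : p ∈ interior (SqP n k γ j))
    (hgraph : p ∈ cubeP k ∧ τ p.1 = p.2) :
    ∃ x ∈ Sq n γ ∩ unitCube k, (j : ℝ) / n < τ x ∧ τ x < ((j : ℝ) + 1) / n := by
  rw [SqP, interior_prod_eq, interior_Icc] at hp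
  exact ⟨p.1, ⟨interior_subset hp.1, hgraph.1.1⟩, hgraph.2 ▸ hp.2⟩

theorem stmt14_general (d n : ℕ) (hd : 2 ≤ d) (hn : 1 ≤ n)
    (β L : ℝ) (hβ : β ∈ Set.Ioc (0 : ℝ) 1) (hL : 0 < L)
    (τ : (Fin (d - 1) → ℝ) → ℝ)
    (hHolder : ∀ x ∈ unitCube (d - 1), ∀ y ∈ unitCube (d - 1),
      |τ x - τ y| ≤ L * ‖x - y‖ ^ β) :
    (({αj : ((Fin (d - 1) → Fin n) × Fin n) |
        (interior (SqP n (d - 1) αj.1 αj.2) ∩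
          bdryIn (cubeP (d - 1))
            {p : (Fin (d - 1) → ℝ) × ℝ | p ∈ cubeP (d - 1) ∧ τ p.1 < p.2}).Nonempty}).ncard
            : ℝ)
      ≤ (L + 2) * (1 / (n : ℝ)) ^ (β - d) := by
  classical
  have hcont : ContinuousOn τ (unitCube (d - 1)) :=
    continuousOn_of_abs_sub_le_mul_rpow hβ.1 hHolder
  have hbdry := bdryIn_setOf_lt_subset (s := cubeP (d - 1)) (f := fun p => τ p.1)
    (hcont.comp continuousOn_fst fun _ hp => hp.1) continuousOn_snd
  rw [Set.ncard_eq_sum_ncard_fiber]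
  push_cast
  calc _ ≤ ∑ _γ : Fin (d - 1) → Fin n, (L * n * (1 / n) ^ β + 2) := by
        refine sum_le_sum fun γ _ => ?_
        rw [Set.ncard_eq_toFinset_card']
        refine card_le_of_holder_meets_layers hn hβ.1 hL.le hHolder γ _ fun j hj => ?_
        obtain ⟨p, hpSq, hpB⟩ := Set.mem_toFinset.mp hj
        exact exists_mem_Sq_of_mem_interior_SqP hpSq (hbdry hpB)
    _ = (n : ℝ) ^ (d - 1) * (L * n * (1 / n) ^ β + 2) := by
        rw [sum_const, card_univ, Fintype.card_fun, Fintype.card_fin, Fintype.card_fin,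
          nsmul_eq_mul, Nat.cast_pow]
    _ ≤ (L + 2) * (1 / (n : ℝ)) ^ (β - d) := pow_mul_add_le_rpow hn (by omega) hβ.2 L

/-- for a `(β,L)`-Hölder change interface `τ : [0,1]^{d−1} → [0,1]`
(with respect to the maximum norm, which is the sup norm on `Fin (d−1) → ℝ`),
the number of grid hypercubes whose interior meets the boundary (in `[0,1]^d`) of
the epigraph `Λ₊` satisfies `|B| ≤ (L + 2)·δ^{β−d}`. -/
theorem stmt14 (d n : ℕ) (hd : 2 ≤ d) (hn : 1 ≤ n)
    (β L : ℝ) (hβ : β ∈ Set.Ioc (0 : ℝ) 1) (hL : 0 < L)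
    (τ : (Fin (d - 1) → ℝ) → ℝ)
    (hτr : ∀ x ∈ unitCube (d - 1), τ x ∈ Set.Icc (0 : ℝ) 1)
    (hHolder : ∀ x ∈ unitCube (d - 1), ∀ y ∈ unitCube (d - 1),
      |τ x - τ y| ≤ L * ‖x - y‖ ^ β) :
    (({αj : ((Fin (d - 1) → Fin n) × Fin n) |
        (interior (SqP n (d - 1) αj.1 αj.2) ∩
          bdryIn (cubeP (d - 1))
            {p : (Fin (d - 1) → ℝ) × ℝ | p ∈ cubeP (d - 1) ∧ τ p.1 < p.2}).Nonempty}).ncard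
            : ℝ)
      ≤ (L + 2) * (1 / (n : ℝ)) ^ (β - d) :=
  stmt14_general d n hd hn β L hβ hL τ hHolder
end
end
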